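/- arXiv:math/0206298 — 6 statements merged into one kernel-verified Lean document; each statement's English description precedes it below -/
import Mathlib

section
/- If a tuple of matrices A_1, ..., A_{p+1} in gl(n, ℂ) (n ≥ 2) with zero sum has generic eigenvalues (i.e. no non-genericity relation holds), then the tuple is irreducible: the matrices have no common invariant subspace V with 0 < dim V < n. -/
/-! If `V` is a common invariant subspace of dimension `m`, then in a basis adapted to `V` each
`A j` is block upper triangular, so the characteristic polynomial of `A j` restricted to `V`
divides that of `A j`: its roots are `m` of the eigenvalues `lam j k`, and the trace of the
restriction is their sum. Since `∑ j, A j = 0`, the traces of the restrictions add up to zero,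
which is a non-genericity relation unless `m = 0` or `m = n`. -/

open Polynomial Matrix

theorem Multiset.exists_le_map_eq_of_le_map {α β : Type*} [DecidableEq β] {f : α → β}
    {s : Multiset α} {t : Multiset β} (h : t ≤ s.map f) : ∃ u ≤ s, u.map f = t := by
  induction s using Multiset.induction_on generalizing t with
  | empty => exact ⟨0, le_rfl, (by simpa using h : t = 0).symm⟩
  | cons a s ih =>
    rw [Multiset.map_cons] at h
    by_cases ha : f a ∈ t
    · obtain ⟨u, hus, hu⟩ := ih (Multiset.erase_le_iff_le_cons.mpr h)
      refine ⟨a ::ₘ u, Multiset.cons_le_cons a hus, ?_⟩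
      rw [Multiset.map_cons, hu, Multiset.cons_erase ha]
    · obtain ⟨u, hus, hu⟩ := ih ((Multiset.le_cons_of_notMem ha).mp h)
      exact ⟨u, hus.trans (Multiset.le_cons_self s a), hu⟩

namespace LinearMap

theorem sum_trace_restrict_eq_zero {R M ι : Type*} [CommRing R] [AddCommGroup M] [Module R M]
    [Fintype ι] (f : ι → Module.End R M) (hf : ∑ j, f j = 0) {V : Submodule R M}
    (hV : ∀ j, ∀ v ∈ V, f j v ∈ V) :
    ∑ j, trace R V ((f j).restrict (hV j)) = 0 := by
  rw [← map_sum]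
  convert map_zero (trace R V)
  ext x
  rw [LinearMap.sum_apply, Submodule.coe_sum]
  simp only [coe_restrict_apply]
  rw [← LinearMap.sum_apply, hf]
  rfl

variable {K M : Type*} [Field K] [AddCommGroup M] [Module K M] [FiniteDimensional K M]

theorem charpoly_restrict_dvd (f : Module.End K M) {V : Submodule K M} (hV : ∀ v ∈ V, f v ∈ V) :
    (f.restrict hV).charpoly ∣ f.charpoly := by
  obtain ⟨W, hW⟩ := V.exists_isCompl
  let bV := Module.finBasis K V
  let e := V.prodEquivOfIsCompl W hW
  let b := (bV.prod (Module.finBasis K W)).map e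
  have hb : ∀ k, b (Sum.inl k) = bV k := by
    intro k
    simp [b, e]
  have hrepr : ∀ x : V, b.repr x = (bV.prod (Module.finBasis K W)).repr (x, 0) := by
    intro x
    simp [b, e]
  have hmem : ∀ k, f (b (Sum.inl k)) ∈ V := fun k => hb k ▸ hV _ (bV k).2
  have h₂₁ : (toMatrix b b f).toBlocks₂₁ = 0 := by
    ext i k
    simp [toBlocks₂₁, toMatrix_apply, hrepr ⟨_, hmem k⟩]
  have h₁₁ : (toMatrix b b f).toBlocks₁₁ = toMatrix bV bV (f.restrict hV) := by
    ext i k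
    simp only [toBlocks₁₁, toMatrix_apply, of_apply]
    rw [show f (b (Sum.inl k)) = ((⟨_, hmem k⟩ : V) : M) from rfl, hrepr,
      Module.Basis.prod_repr_inl]
    congr 2
    ext
    simp [hb]
  rw [← charpoly_toMatrix f b, ← fromBlocks_toBlocks (toMatrix b b f), h₂₁, h₁₁,
    charpoly_fromBlocks_zero₂₁, charpoly_toMatrix]
  exact dvd_mul_right _ _

theorem trace_eq_sum_roots_charpoly_of_splits (f : Module.End K M) (hf : f.charpoly.Splits) :
    trace K M f = f.charpoly.roots.sum := by
  let b := Module.finBasis K M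
  rw [← charpoly_toMatrix f b] at hf ⊢
  rw [trace_eq_matrix_trace K b]
  exact Matrix.trace_eq_sum_roots_charpoly_of_splits hf

theorem exists_finset_card_eq_finrank_and_trace_restrict_eq_sum {ι : Type*} [Fintype ι]
    (f : Module.End K M) (a : ι → K) (hf : f.charpoly = ∏ k, (X - C (a k)))
    {V : Submodule K M} (hV : ∀ v ∈ V, f v ∈ V) :
    ∃ Φ : Finset ι, Φ.card = Module.finrank K V ∧ trace K V (f.restrict hV) = ∑ k ∈ Φ, a k := by
  classical
  set g := f.restrict hV
  have hroots : f.charpoly.roots = Finset.univ.val.map a := by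
    rw [hf, Finset.prod_eq_multiset_prod, ← roots_multiset_prod_X_sub_C (Finset.univ.val.map a),
      Multiset.map_map]
    rfl
  have hsplits : g.charpoly.Splits := by
    refine Splits.of_dvd ?_ f.charpoly_monic.ne_zero (charpoly_restrict_dvd f hV)
    rw [hf]
    exact Splits.prod fun k _ => Splits.X_sub_C (a k)
  obtain ⟨u, hu, hua⟩ := Multiset.exists_le_map_eq_of_le_map
    (hroots ▸ roots.le_of_dvd f.charpoly_monic.ne_zero (charpoly_restrict_dvd f hV))
  refine ⟨⟨u, Multiset.nodup_of_le hu Finset.univ.nodup⟩, ?_, ?_⟩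
  · rw [Finset.card_mk, ← Multiset.card_map a, hua, ← hsplits.natDegree_eq_card_roots,
      charpoly_natDegree]
  · rw [trace_eq_sum_roots_charpoly_of_splits g hsplits, ← hua, Finset.sum_mk]

end LinearMap

theorem stmt9_general (p n : ℕ) (A : Fin (p + 1) → Matrix (Fin n) (Fin n) ℂ)
    (hsum : ∑ j, A j = 0)
    (lam : Fin (p + 1) → Fin n → ℂ)
    (hlam : ∀ j, (A j).charpoly = ∏ k, (X - C (lam j k)))
    (hgen : ¬∃ (m : ℕ) (Φ : Fin (p + 1) → Finset (Fin n)),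
      0 < m ∧ m < n ∧ (∀ j, (Φ j).card = m) ∧ ∑ j, ∑ k ∈ Φ j, lam j k = 0) :
    ∀ V : Submodule ℂ (Fin n → ℂ),
      (∀ j, ∀ v ∈ V, Matrix.toLin' (A j) v ∈ V) → V = ⊥ ∨ V = ⊤ := by
  intro V hV
  by_contra! hproper
  obtain ⟨hbot, htop⟩ := hproper
  have hpos : 0 < Module.finrank ℂ V := Submodule.one_le_finrank_iff.mpr hbot
  have hlt : Module.finrank ℂ V < n := by
    simpa using Submodule.finrank_lt htop
  choose Φ hcard htrace using fun j =>
    LinearMap.exists_finset_card_eq_finrank_and_trace_restrict_eq_sum (Matrix.toLin' (A j))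
      (lam j) ((Matrix.charpoly_toLin' (A j)).trans (hlam j)) (hV j)
  refine hgen ⟨Module.finrank ℂ V, Φ, hpos, hlt, hcard, ?_⟩
  have hsumLin : ∑ j, Matrix.toLin' (A j) = 0 := by rw [← map_sum, hsum, map_zero]
  simpa only [← htrace] using LinearMap.sum_trace_restrict_eq_zero _ hsumLin hV

theorem stmt9 (p n : ℕ) (hn : 2 ≤ n) (A : Fin (p + 1) → Matrix (Fin n) (Fin n) ℂ)
    (hsum : ∑ j, A j = 0)
    (lam : Fin (p + 1) → Fin n → ℂ)
    (hlam : ∀ j, (A j).charpoly = ∏ k, (X - C (lam j k)))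
    (hgen : ¬∃ (m : ℕ) (Φ : Fin (p + 1) → Finset (Fin n)),
      0 < m ∧ m < n ∧ (∀ j, (Φ j).card = m) ∧ ∑ j, ∑ k ∈ Φ j, lam j k = 0) :
    ∀ V : Submodule ℂ (Fin n → ℂ),
      (∀ j, ∀ v ∈ V, Matrix.toLin' (A j) v ∈ V) → V = ⊥ ∨ V = ⊤ :=
  stmt9_general p n A hsum lam hlam hgen
end

section
/- Suppose n = 2, p = 2, and conjugacy classes c_1, c_2 ⊂ gl(2,ℂ) have distinct eigenvalues λ_{1,j} ≠ λ_{2,j} (j = 1,2), while c_3 is the scalar class {λ_{1,3} I}. Then there exist matrices A_j ∈ c_j with A_1 + A_2 + A_3 = 0 if and only if λ_{1,1} + λ_{1,2} + λ_{1,3} = 0 or λ_{1,1} + λ_{2,2} + λ_{1,3} = 0. -/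
open Matrix

lemma conj_det (g : GL (Fin 2) ℂ) (M : Matrix (Fin 2) (Fin 2) ℂ) :
    ((g : Matrix (Fin 2) (Fin 2) ℂ) * M *
      ((g⁻¹ : GL (Fin 2) ℂ) : Matrix (Fin 2) (Fin 2) ℂ)).det = M.det := by
  have h : (g : Matrix (Fin 2) (Fin 2) ℂ).det *
      ((g⁻¹ : GL (Fin 2) ℂ) : Matrix (Fin 2) (Fin 2) ℂ).det = 1 := by
    rw [← Matrix.det_mul, ← Units.val_mul, mul_inv_cancel, Units.val_one, Matrix.det_one]
  rw [Matrix.det_mul, Matrix.det_mul]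
  calc (g : Matrix (Fin 2) (Fin 2) ℂ).det * M.det *
        ((g⁻¹ : GL (Fin 2) ℂ) : Matrix (Fin 2) (Fin 2) ℂ).det
      = M.det * ((g : Matrix (Fin 2) (Fin 2) ℂ).det *
        ((g⁻¹ : GL (Fin 2) ℂ) : Matrix (Fin 2) (Fin 2) ℂ).det) := by ring
    _ = M.det := by rw [h, mul_one]

lemma conj_smul_one (g : GL (Fin 2) ℂ) (c : ℂ) :
    (g : Matrix (Fin 2) (Fin 2) ℂ) * (c • (1 : Matrix (Fin 2) (Fin 2) ℂ)) *
      ((g⁻¹ : GL (Fin 2) ℂ) : Matrix (Fin 2) (Fin 2) ℂ) = c • 1 := by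
  rw [Matrix.mul_smul, Matrix.mul_one, Matrix.smul_mul, ← Units.val_mul, mul_inv_cancel,
    Units.val_one]

theorem stmt11 (l11 l21 l12 l22 l13 : ℂ)
    (h1 : l11 ≠ l21) (h2 : l12 ≠ l22)
    (htr : l11 + l21 + l12 + l22 + 2 * l13 = 0) :
    (∃ A1 A2 A3 : Matrix (Fin 2) (Fin 2) ℂ,
      (∃ g : GL (Fin 2) ℂ, A1 = (g : Matrix (Fin 2) (Fin 2) ℂ) *
        Matrix.diagonal ![l11, l21] * ((g⁻¹ : GL (Fin 2) ℂ) : Matrix (Fin 2) (Fin 2) ℂ)) ∧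
      (∃ g : GL (Fin 2) ℂ, A2 = (g : Matrix (Fin 2) (Fin 2) ℂ) *
        Matrix.diagonal ![l12, l22] * ((g⁻¹ : GL (Fin 2) ℂ) : Matrix (Fin 2) (Fin 2) ℂ)) ∧
      A3 = l13 • (1 : Matrix (Fin 2) (Fin 2) ℂ) ∧
      A1 + A2 + A3 = 0) ↔
    (l11 + l12 + l13 = 0 ∨ l11 + l22 + l13 = 0) := by
  constructor
  · rintro ⟨A1, A2, A3, ⟨g, hg⟩, ⟨h, hh⟩, hA3, hsum⟩
    -- A2 = g * (-(D1) - l13 • 1) * g⁻¹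
    have hA2 : A2 = (g : Matrix (Fin 2) (Fin 2) ℂ) *
        (-(Matrix.diagonal ![l11, l21]) - l13 • 1) *
        ((g⁻¹ : GL (Fin 2) ℂ) : Matrix (Fin 2) (Fin 2) ℂ) := by
      have : A2 = -A1 - l13 • 1 := by
        have := hsum
        rw [hA3] at this
        linear_combination (norm := abel) this
      rw [this, hg]
      rw [Matrix.mul_sub, Matrix.sub_mul, Matrix.mul_neg, Matrix.neg_mul]
      rw [conj_smul_one]
    have hdet : (Matrix.diagonal ![l12, l22]).det =
        ((-(Matrix.diagonal ![l11, l21]) - l13 • (1 : Matrix (Fin 2) (Fin 2) ℂ))).det := by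
      rw [← conj_det h (Matrix.diagonal ![l12, l22]), ← hh, hA2, conj_det]
    rw [Matrix.det_fin_two, Matrix.det_fin_two] at hdet
    simp [Matrix.diagonal, Matrix.one_apply] at hdet
    have key : (l11 + l12 + l13) * (l21 + l12 + l13) = 0 := by
      linear_combination l12 * htr - hdet
    rcases mul_eq_zero.mp key with hk | hk
    · exact Or.inl hk
    · right; linear_combination htr - hk
  · intro hcase
    let P : Matrix (Fin 2) (Fin 2) ℂ := !![0, 1; 1, 0]
    have hP : P * P = 1 := by
      ext i j
      fin_cases i <;> fin_cases j <;>
        simp [P, Matrix.mul_apply, Fin.sum_univ_two, Matrix.one_apply]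
    let gP : GL (Fin 2) ℂ := ⟨P, P, hP, hP⟩
    rcases hcase with hc | hc
    · refine ⟨Matrix.diagonal ![l11, l21], Matrix.diagonal ![l12, l22], l13 • 1,
        ⟨1, by simp⟩, ⟨1, by simp⟩, rfl, ?_⟩
      have h22 : l21 + l22 + l13 = 0 := by linear_combination htr - hc
      ext i j
      fin_cases i <;> fin_cases j <;>
        simp [Matrix.diagonal, Matrix.one_apply] <;> first | linear_combination hc | linear_combination h22
    · refine ⟨Matrix.diagonal ![l21, l11], Matrix.diagonal ![l12, l22], l13 • 1,
        ⟨gP, ?_⟩, ⟨1, by simp⟩, rfl, ?_⟩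
      · have : ((gP⁻¹ : GL (Fin 2) ℂ) : Matrix (Fin 2) (Fin 2) ℂ) = P := rfl
        rw [this]
        ext i j
        fin_cases i <;> fin_cases j <;>
          simp [gP, P, Matrix.mul_apply, Fin.sum_univ_two, Matrix.diagonal, Matrix.vecHead, Matrix.vecTail]
      · have h11 : l21 + l12 + l13 = 0 := by linear_combination htr - hc
        ext i j
        fin_cases i <;> fin_cases j <;>
          simp [Matrix.diagonal, Matrix.one_apply] <;> first | linear_combination h11 | linear_combination hc
end

section
/- Suppose n = 2, p = 2, and conjugacy classes C_1, C_2 ⊂ GL(2,ℂ) have distinct eigenvalues σ_{1,j} ≠ σ_{2,j} (j = 1,2), while C_3 is the scalar class {σ_{1,3} I}. Then there exist matrices M_j ∈ C_j with M_1 M_2 M_3 = I if and only if σ_{1,1} σ_{1,2} σ_{1,3} = 1 or σ_{1,1} σ_{2,2} σ_{1,3} = 1. -/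
open Matrix

noncomputable def swapGL : GL (Fin 2) ℂ :=
  ⟨!![0,1;1,0], !![0,1;1,0],
    by ext i j; fin_cases i <;> fin_cases j <;> simp [Matrix.mul_apply, Fin.sum_univ_two, Matrix.one_apply],
    by ext i j; fin_cases i <;> fin_cases j <;> simp [Matrix.mul_apply, Fin.sum_univ_two, Matrix.one_apply]⟩

lemma swapGL_conj (a b : ℂ) :
    (swapGL : Matrix (Fin 2) (Fin 2) ℂ) * diagonal ![a,b] *
      ((swapGL⁻¹ : GL (Fin 2) ℂ) : Matrix (Fin 2) (Fin 2) ℂ) = diagonal ![b,a] := by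
  show !![(0:ℂ),1;1,0] * diagonal ![a,b] * !![0,1;1,0] = diagonal ![b,a]
  ext i j; fin_cases i <;> fin_cases j <;>
    simp [Matrix.mul_apply, Fin.sum_univ_two, Matrix.diagonal_apply, Matrix.vecHead,
      Matrix.vecTail, Matrix.vecMul, dotProduct]

lemma diag_mul_smul_one (a b s13 : ℂ) (ha : a * s13 = 1) (hb : b * s13 = 1) :
    diagonal ![a,b] * (s13 • (1 : Matrix (Fin 2) (Fin 2) ℂ)) = 1 := by
  ext i j; fin_cases i <;> fin_cases j <;>
    simp [Matrix.mul_apply, Fin.sum_univ_two, Matrix.diagonal_apply, Matrix.one_apply,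
      Matrix.vecHead, Matrix.vecTail, Matrix.vecMul, dotProduct] <;>
    first
    | linear_combination ha
    | linear_combination hb

set_option maxHeartbeats 1600000 in
theorem stmt12 (s11 s21 s12 s22 s13 : ℂ)
    (hnz : s11 ≠ 0 ∧ s21 ≠ 0 ∧ s12 ≠ 0 ∧ s22 ≠ 0 ∧ s13 ≠ 0)
    (h1 : s11 ≠ s21) (h2 : s12 ≠ s22)
    (hdet : s11 * s21 * s12 * s22 * s13 ^ 2 = 1) :
    (∃ M1 M2 M3 : Matrix (Fin 2) (Fin 2) ℂ,
      (∃ g : GL (Fin 2) ℂ, M1 = (g : Matrix (Fin 2) (Fin 2) ℂ) *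
        Matrix.diagonal ![s11, s21] * ((g⁻¹ : GL (Fin 2) ℂ) : Matrix (Fin 2) (Fin 2) ℂ)) ∧
      (∃ g : GL (Fin 2) ℂ, M2 = (g : Matrix (Fin 2) (Fin 2) ℂ) *
        Matrix.diagonal ![s12, s22] * ((g⁻¹ : GL (Fin 2) ℂ) : Matrix (Fin 2) (Fin 2) ℂ)) ∧
      M3 = s13 • (1 : Matrix (Fin 2) (Fin 2) ℂ) ∧
      M1 * M2 * M3 = 1) ↔
    (s11 * s12 * s13 = 1 ∨ s11 * s22 * s13 = 1) := by
  obtain ⟨hs11, hs21, hs12, hs22, hs13⟩ := hnz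
  have conj_sub : ∀ (u : GL (Fin 2) ℂ) (X : Matrix (Fin 2) (Fin 2) ℂ) (t : ℂ),
      (u : Matrix (Fin 2) (Fin 2) ℂ) * X * (↑u⁻¹ : Matrix (Fin 2) (Fin 2) ℂ) - t • 1
        = (u : Matrix (Fin 2) (Fin 2) ℂ) * (X - t • 1) * (↑u⁻¹ : Matrix (Fin 2) (Fin 2) ℂ) := by
    intro u X t
    have huu : (u : Matrix (Fin 2) (Fin 2) ℂ) * (↑u⁻¹ : Matrix (Fin 2) (Fin 2) ℂ) = 1 :=
      by exact_mod_cast Units.mul_inv u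
    rw [mul_sub, sub_mul, mul_smul_comm, smul_mul_assoc, mul_one, huu]
  have det_conj : ∀ (u : GL (Fin 2) ℂ) (X : Matrix (Fin 2) (Fin 2) ℂ),
      ((u : Matrix (Fin 2) (Fin 2) ℂ) * X * (↑u⁻¹ : Matrix (Fin 2) (Fin 2) ℂ)).det = X.det := by
    intro u X
    have huu : (u : Matrix (Fin 2) (Fin 2) ℂ) * (↑u⁻¹ : Matrix (Fin 2) (Fin 2) ℂ) = 1 :=
      by exact_mod_cast Units.mul_inv u
    have hone : det ((u : Matrix (Fin 2) (Fin 2) ℂ)) * det ((↑u⁻¹ : Matrix (Fin 2) (Fin 2) ℂ)) = 1 := by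
      rw [← det_mul, huu, det_one]
    rw [det_mul, det_mul]
    calc det (u : Matrix (Fin 2) (Fin 2) ℂ) * det X * det (↑u⁻¹ : Matrix (Fin 2) (Fin 2) ℂ)
        = det X * (det (u : Matrix (Fin 2) (Fin 2) ℂ) * det (↑u⁻¹ : Matrix (Fin 2) (Fin 2) ℂ)) := by ring
      _ = det X := by rw [hone, mul_one]
  constructor
  · rintro ⟨M1, M2, M3, ⟨g, hg⟩, ⟨h, hh⟩, hM3, hprod⟩
    have h12 : M1 * M2 = s13⁻¹ • 1 := by
      rw [hM3, mul_smul_comm, mul_one] at hprod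
      calc M1 * M2 = s13⁻¹ • (s13 • (M1 * M2)) := by
            rw [smul_smul, inv_mul_cancel₀ hs13, one_smul]
        _ = s13⁻¹ • 1 := by rw [hprod]
    have hd2 : (M2 - s12 • 1).det = 0 := by
      rw [hh, conj_sub, det_conj]
      simp [Matrix.det_fin_two, Matrix.diagonal, Matrix.one_apply]
    have key : (s13⁻¹ - s12 * s11) * (s13⁻¹ - s12 * s21) = 0 := by
      have e1 : M1 * (M2 - s12 • 1) = s13⁻¹ • 1 - s12 • M1 := by
        rw [mul_sub, h12, mul_smul_comm, mul_one]
      have e2 : (s13⁻¹ • (1 : Matrix (Fin 2) (Fin 2) ℂ) - s12 • M1).det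
          = (s13⁻¹ - s12 * s11) * (s13⁻¹ - s12 * s21) := by
        rw [hg]
        have heq : s13⁻¹ • (1 : Matrix (Fin 2) (Fin 2) ℂ)
              - s12 • ((g : Matrix (Fin 2) (Fin 2) ℂ) * diagonal ![s11, s21] * (↑g⁻¹ : Matrix (Fin 2) (Fin 2) ℂ))
            = -s12 • ((g : Matrix (Fin 2) (Fin 2) ℂ) * (diagonal ![s11, s21] - (s13⁻¹ / s12) • 1) * (↑g⁻¹ : Matrix (Fin 2) (Fin 2) ℂ)) := by
          rw [← conj_sub, neg_smul, smul_sub, neg_sub, smul_smul, mul_div_cancel₀ _ hs12]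
        rw [heq, det_smul, det_conj]
        simp only [Fintype.card_fin]
        simp [Matrix.det_fin_two, Matrix.diagonal, Matrix.one_apply]
        field_simp
        ring
      have e3 := congrArg Matrix.det e1
      rw [det_mul, hd2, mul_zero, e2] at e3
      exact e3.symm
    rcases mul_eq_zero.mp key with hk | hk
    · left
      have hk' : s13⁻¹ = s12 * s11 := sub_eq_zero.mp hk
      field_simp at hk'
      linear_combination -hk'
    · right
      have hk' : s13⁻¹ = s12 * s21 := sub_eq_zero.mp hk
      field_simp at hk'
      linear_combination hdet + s11 * s22 * s13 * hk'
  · have hone : ∀ X : Matrix (Fin 2) (Fin 2) ℂ,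
        X = ((1 : GL (Fin 2) ℂ) : Matrix (Fin 2) (Fin 2) ℂ) * X *
          (((1 : GL (Fin 2) ℂ)⁻¹ : GL (Fin 2) ℂ) : Matrix (Fin 2) (Fin 2) ℂ) := by
      intro X
      rw [inv_one]
      show X = 1 * X * 1
      rw [one_mul, mul_one]
    rintro (hc | hc)
    · have hc2 : s21 * s22 * s13 = 1 := by
        linear_combination hdet - s21 * s22 * s13 * hc
      refine ⟨diagonal ![s11, s21], diagonal ![s12, s22], s13 • 1, ⟨1, hone _⟩,
        ⟨1, hone _⟩, rfl, ?_⟩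
      rw [Matrix.diagonal_mul_diagonal]
      have hv : (fun i => ![s11, s21] i * ![s12, s22] i) = ![s11 * s12, s21 * s22] := by
        funext i; fin_cases i <;> simp
      rw [hv]
      exact diag_mul_smul_one _ _ _ (by linear_combination hc) (by linear_combination hc2)
    · have hc2 : s21 * s12 * s13 = 1 := by
        linear_combination hdet - s21 * s12 * s13 * hc
      refine ⟨diagonal ![s11, s21],
        (swapGL : Matrix (Fin 2) (Fin 2) ℂ) * diagonal ![s12, s22] *
          ((swapGL⁻¹ : GL (Fin 2) ℂ) : Matrix (Fin 2) (Fin 2) ℂ), s13 • 1,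
        ⟨1, hone _⟩, ⟨swapGL, rfl⟩, rfl, ?_⟩
      rw [swapGL_conj, Matrix.diagonal_mul_diagonal]
      have hv : (fun i => ![s11, s21] i * ![s22, s12] i) = ![s11 * s22, s21 * s12] := by
        funext i; fin_cases i <;> simp
      rw [hv]
      exact diag_mul_smul_one _ _ _ (by linear_combination hc) (by linear_combination hc2)
end

section
/- If A ∈ gl(n, ℂ) has no two distinct eigenvalues differing by a non-zero integer, then the Jordan normal form of exp(2πi A) is determined by that of A: for every eigenvalue λ of A and every k ≥ 1, rank((A − λI)^k) − rank((A − λI)^{k+1}) equals rank((exp(2πiA) − e^{2πiλ}I)^k) − rank((exp(2πiA) − e^{2πiλ}I)^{k+1}); in particular exp(2πiA) is conjugate to exp(2πiJ) where J is the Jordan form of A. -/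
/-!
Write `c = 2πi`, `N = A - λ` and `φ(x) = (exp x - 1) / x = ∑ xᵏ / (k + 1)!`. Then
`exp(cA) - e^{cλ} = e^{cλ} (exp(cN) - 1) = cN · e^{cλ} φ(cN)`, and the second factor commutes
with `N`. Its eigenvalues are the numbers `e^{cλ} φ(c(μ - λ))` for the eigenvalues `μ` of `A`,
and `φ(z)` vanishes only when `z ∈ 2πiℤ` and `z ≠ 0`. So the factor is invertible exactly
because no eigenvalue `μ ≠ λ` differs from `λ` by an integer. Multiplying the powers of `N` by
an invertible matrix that commutes with `N` does not change their ranks.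
-/

open Polynomial Matrix NormedSpace

noncomputable def expSubOneDiv {𝔸 : Type*} [Ring 𝔸] [Module ℂ 𝔸] [TopologicalSpace 𝔸]
    (x : 𝔸) : 𝔸 :=
  ∑' k : ℕ, ((k + 1).factorial : ℂ)⁻¹ • x ^ k

lemma expSubOneDiv_zero {𝔸 : Type*} [Ring 𝔸] [Module ℂ 𝔸] [TopologicalSpace 𝔸] [T2Space 𝔸] :
    expSubOneDiv (0 : 𝔸) = 1 := by
  rw [expSubOneDiv, tsum_eq_single 0 fun k hk => by simp [zero_pow hk]]
  simp

section NormedAlgebra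

variable {𝔸 : Type*} [NormedRing 𝔸] [NormedAlgebra ℂ 𝔸] [CompleteSpace 𝔸]

lemma summable_expSubOneDiv_series (x : 𝔸) :
    Summable fun k : ℕ => ((k + 1).factorial : ℂ)⁻¹ • x ^ k := by
  refine .of_norm_bounded_eventually (Real.summable_pow_div_factorial ‖x‖) ?_
  filter_upwards [Filter.eventually_cofinite_ne 0] with k hk
  rw [norm_smul, mul_comm, norm_inv, RCLike.norm_natCast, ← div_eq_mul_inv]
  exact div_le_div₀ (pow_nonneg (norm_nonneg _) k) (norm_pow_le' x (Nat.pos_of_ne_zero hk))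
    (mod_cast Nat.factorial_pos k) (mod_cast Nat.factorial_le (Nat.le_succ k))

lemma exp_eq_one_add_mul_expSubOneDiv (x : 𝔸) : exp x = 1 + x * expSubOneDiv x := by
  rw [exp_eq_tsum ℂ]
  beta_reduce
  rw [(expSeries_summable' (𝕂 := ℂ) x).tsum_eq_zero_add,
    expSubOneDiv, ← (summable_expSubOneDiv_series x).tsum_mul_left]
  simp [pow_succ']

lemma Commute.expSubOneDiv_right {x y : 𝔸} (h : Commute y x) : Commute y (expSubOneDiv x) := by
  rw [Commute, SemiconjBy, expSubOneDiv, ← (summable_expSubOneDiv_series x).tsum_mul_left,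
    ← (summable_expSubOneDiv_series x).tsum_mul_right]
  simp only [mul_smul_comm, smul_mul_assoc, (h.pow_right _).eq]

lemma exp_sub_exp_smul_one (a : 𝔸) (z : ℂ) :
    exp a - Complex.exp z • (1 : 𝔸)
      = (a - z • 1) * (Complex.exp z • expSubOneDiv (a - z • 1)) := by
  let : NormedAlgebra ℚ 𝔸 := NormedAlgebra.restrictScalars ℚ ℂ 𝔸
  have hcomm : Commute (a - z • 1) (z • 1 : 𝔸) := (Commute.one_right _).smul_right z
  have hexp : exp (z • 1 : 𝔸) = Complex.exp z • 1 := by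
    simp only [← Algebra.algebraMap_eq_smul_one, ← algebraMap_exp_comm, Complex.exp_eq_exp_ℂ]
  conv_lhs => rw [← sub_add_cancel a (z • 1), NormedSpace.exp_add_of_commute hcomm, hexp,
    exp_eq_one_add_mul_expSubOneDiv]
  rw [mul_smul_comm, mul_one, smul_add, add_sub_cancel_left, mul_smul_comm]

end NormedAlgebra

lemma Complex.expSubOneDiv_eq_zero_iff {z : ℂ} :
    expSubOneDiv z = 0 ↔ z ≠ 0 ∧ Complex.exp z = 1 := by
  rw [Complex.exp_eq_exp_ℂ, exp_eq_one_add_mul_expSubOneDiv, add_eq_left, mul_eq_zero]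
  constructor
  · intro h
    exact ⟨fun hz => by simp [hz, expSubOneDiv_zero] at h, Or.inr h⟩
  · rintro ⟨hz, h | h⟩
    exacts [absurd h hz, h]

theorem Module.End.exists_hasEigenvector_mem_ker_of_commute {K V : Type*} [Field K]
    [IsAlgClosed K] [AddCommGroup V] [Module K V] [FiniteDimensional K V] {f g : Module.End K V}
    (hfg : Commute f g) (hg : ¬IsUnit g) : ∃ μ v, f.HasEigenvector μ v ∧ g v = 0 := by
  have hmaps : Set.MapsTo f (LinearMap.ker g) (LinearMap.ker g) := fun v hv => by
    rw [SetLike.mem_coe, LinearMap.mem_ker] at hv ⊢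
    rw [← Module.End.mul_apply, ← hfg.eq, Module.End.mul_apply, hv, map_zero]
  have : Nontrivial (LinearMap.ker g) :=
    Submodule.nontrivial_iff_ne_bot.2 fun h => hg ((LinearMap.isUnit_iff_ker_eq_bot g).2 h)
  obtain ⟨μ, hμ⟩ := Module.End.exists_eigenvalue (f.restrict hmaps)
  obtain ⟨v, hv⟩ := hμ.exists_hasEigenvector
  refine ⟨μ, v, ⟨Module.End.mem_eigenspace_iff.2 ?_, ?_⟩, v.2⟩
  · exact congrArg Subtype.val hv.apply_eq_smul
  · exact fun h => hv.2 (Subtype.ext h)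

lemma spectrum.exists_eq_mul_sub_of_mem_smul_sub {𝕜 A : Type*} [Field 𝕜] [Ring A]
    [Algebra 𝕜 A] {a : A} {c z ν : 𝕜} (hc : c ≠ 0) (hν : ν ∈ spectrum 𝕜 (c • (a - z • 1))) :
    ∃ μ ∈ spectrum 𝕜 a, ν = c * (μ - z) := by
  rw [← Units.smul_mk0 hc, spectrum.unit_smul_eq_smul, ← Algebra.algebraMap_eq_smul_one,
    ← spectrum.sub_singleton_eq, Set.sub_singleton] at hν
  obtain ⟨_, ⟨μ, hμ, rfl⟩, rfl⟩ := hν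
  exact ⟨μ, hμ, rfl⟩

namespace Matrix

variable {ι : Type*} [Fintype ι] [DecidableEq ι]

lemma rank_mul_pow_of_commute_of_isUnit {R : Type*} [CommRing R] {N F : Matrix ι ι R}
    (hNF : Commute N F) (hF : IsUnit F) (k : ℕ) :
    ((N * F) ^ k).rank = (N ^ k).rank := by
  rw [hNF.mul_pow, rank_mul_eq_left_of_isUnit_det _ _ ((isUnit_iff_isUnit_det _).1 (hF.pow k))]

section OperatorNorm

/- Any Banach-algebra norm inducing the product topology would do: the statements below do not
mention it. -/
attribute [local instance] Matrix.linftyOpNormedRing Matrix.linftyOpNormedAlgebra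

lemma exp_sub_exp_smul_one (X : Matrix ι ι ℂ) (z : ℂ) :
    exp X - Complex.exp z • (1 : Matrix ι ι ℂ)
      = (X - z • 1) * (Complex.exp z • expSubOneDiv (X - z • 1)) :=
  _root_.exp_sub_exp_smul_one X z

lemma commute_expSubOneDiv {X Y : Matrix ι ι ℂ} (h : Commute Y X) :
    Commute Y (expSubOneDiv X) :=
  h.expSubOneDiv_right

lemma expSubOneDiv_mulVec_of_mulVec_eq_smul {X : Matrix ι ι ℂ} {w : ι → ℂ} {ν : ℂ}
    (h : X *ᵥ w = ν • w) : expSubOneDiv X *ᵥ w = expSubOneDiv ν • w := by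
  have hpow (k : ℕ) : X ^ k *ᵥ w = ν ^ k • w := by
    induction k with
    | zero => simp
    | succ k ih => rw [pow_succ', ← mulVec_mulVec, ih, mulVec_smul, h, smul_smul, ← pow_succ]
  have hX := (summable_expSubOneDiv_series X).hasSum.map (mulVec.addMonoidHomLeft w)
    (continuous_id.matrix_mulVec continuous_const)
  have hν := (summable_expSubOneDiv_series ν).hasSum.smul_const w
  refine hX.unique (hν.congr_fun fun k => ?_)
  simp [mulVec.addMonoidHomLeft, smul_mulVec, hpow, smul_smul]

end OperatorNorm

lemma isUnit_expSubOneDiv (X : Matrix ι ι ℂ)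
    (h : ∀ ν ∈ spectrum ℂ X, Complex.exp ν = 1 → ν = 0) : IsUnit (expSubOneDiv X) := by
  by_contra hX
  obtain ⟨μ, v, hv, hker⟩ := Module.End.exists_hasEigenvector_mem_ker_of_commute
    ((commute_expSubOneDiv (Commute.refl X)).map toLinAlgEquiv') (by rwa [isUnit_map_iff])
  have hμ : expSubOneDiv μ = 0 := by
    refine (smul_eq_zero.1 ?_).resolve_right hv.2
    rw [← expSubOneDiv_mulVec_of_mulVec_eq_smul hv.apply_eq_smul]
    exact hker
  obtain ⟨hμ0, hexp⟩ := Complex.expSubOneDiv_eq_zero_iff.1 hμ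
  have hμX : μ ∈ spectrum ℂ X :=
    spectrum_toLin' X ▸ (Module.End.hasEigenvalue_of_hasEigenvector hv).mem_spectrum
  exact hμ0 (h μ hμX hexp)

lemma isUnit_expSubOneDiv_two_pi_I_smul_sub (A : Matrix ι ι ℂ) (lam : ℂ)
    (h : ∀ μ ∈ spectrum ℂ A, (∃ m : ℤ, μ - lam = m) → μ = lam) :
    IsUnit (expSubOneDiv ((2 * Real.pi * Complex.I : ℂ) • (A - lam • 1))) := by
  refine isUnit_expSubOneDiv _ fun ν hν hexp => ?_
  obtain ⟨μ, hμ, rfl⟩ :=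
    spectrum.exists_eq_mul_sub_of_mem_smul_sub Complex.two_pi_I_ne_zero hν
  obtain ⟨m, hm⟩ := Complex.exp_eq_one_iff.1 hexp
  have hμm : μ - lam = m := mul_left_cancel₀ Complex.two_pi_I_ne_zero (by rw [hm]; ring)
  rw [h μ hμ ⟨m, hμm⟩, sub_self, mul_zero]

lemma rank_pow_exp_smul_sub_eq (A : Matrix ι ι ℂ) {c : ℂ} (hc : c ≠ 0) (lam : ℂ)
    (hunit : IsUnit (expSubOneDiv (c • (A - lam • 1)))) (k : ℕ) :
    ((exp (c • A) - Complex.exp (c * lam) • (1 : Matrix ι ι ℂ)) ^ k).rank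
      = ((A - lam • 1) ^ k).rank := by
  have hfactor : exp (c • A) - Complex.exp (c * lam) • (1 : Matrix ι ι ℂ)
      = c • (A - lam • 1) * (Complex.exp (c * lam) • expSubOneDiv (c • (A - lam • 1))) := by
    rw [exp_sub_exp_smul_one, ← smul_smul, ← smul_sub]
  have hcomm : Commute (c • (A - lam • 1))
      (Complex.exp (c * lam) • expSubOneDiv (c • (A - lam • 1))) :=
    (commute_expSubOneDiv (Commute.refl _)).smul_right _
  have hF : IsUnit (Complex.exp (c * lam) • expSubOneDiv (c • (A - lam • 1))) := by
    rwa [← Units.smul_mk0 (Complex.exp_ne_zero _), isUnit_smul_iff]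
  rw [hfactor, rank_mul_pow_of_commute_of_isUnit hcomm hF, _root_.smul_pow,
    rank_smul_of_mem_nonZeroDivisors _ (mem_nonZeroDivisors_of_ne_zero (pow_ne_zero k hc))]

end Matrix

theorem stmt14 (n : ℕ) (A : Matrix (Fin n) (Fin n) ℂ)
    (hint : ∀ lam mu : ℂ, lam ∈ A.charpoly.roots → mu ∈ A.charpoly.roots →
      (∃ z : ℤ, lam - mu = (z : ℂ)) → lam = mu) :
    ∀ lam ∈ A.charpoly.roots, ∀ k : ℕ, 1 ≤ k →
      ((A - lam • (1 : Matrix (Fin n) (Fin n) ℂ)) ^ k).rank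
          - ((A - lam • (1 : Matrix (Fin n) (Fin n) ℂ)) ^ (k + 1)).rank
        = ((NormedSpace.exp ((2 * (Real.pi : ℂ) * Complex.I) • A)
              - Complex.exp (2 * (Real.pi : ℂ) * Complex.I * lam)
                  • (1 : Matrix (Fin n) (Fin n) ℂ)) ^ k).rank
          - ((NormedSpace.exp ((2 * (Real.pi : ℂ) * Complex.I) • A)
              - Complex.exp (2 * (Real.pi : ℂ) * Complex.I * lam)
                  • (1 : Matrix (Fin n) (Fin n) ℂ)) ^ (k + 1)).rank := by
  intro lam hlam k _
  have hroots : ∀ μ ∈ spectrum ℂ A, μ ∈ A.charpoly.roots := fun μ hμ => by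
    rwa [mem_roots A.charpoly_monic.ne_zero, ← mem_spectrum_iff_isRoot_charpoly]
  have hunit := A.isUnit_expSubOneDiv_two_pi_I_smul_sub lam
    fun μ hμ hμlam => hint μ lam (hroots μ hμ) hlam hμlam
  rw [A.rank_pow_exp_smul_sub_eq Complex.two_pi_I_ne_zero lam hunit,
    A.rank_pow_exp_smul_sub_eq Complex.two_pi_I_ne_zero lam hunit]
end

section
/- For any matrices M_1, ..., M_{p+1} in GL(n, ℂ) with M_1 ⋯ M_{p+1} = I that form an irreducible tuple, and for any b_1, ..., b_{p+1} ∈ ℂ* with b_1 ⋯ b_{p+1} = 1, one has rank(b_1 M_1 − I) + ⋯ + rank(b_{p+1} M_{p+1} − I) ≥ 2n. -/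
/-!
Put `N j = b j • M j`. The `N j` multiply to `1`, have the same invariant subspaces as the `M j`,
and are not all the identity since `n ≥ 2`. With `D j = N 0 ⋯ N (j - 1)`, the maps
`V → ⨁ j, range (N j - 1) → V`, `v ↦ ((N j - 1) v)_j` and `w ↦ ∑ j, D j (w j)`, form a complex,
because `∑ j, D j * (N j - 1)` telescopes to `N 0 ⋯ N p - 1 = 0`. Irreducibility makes the first
map injective (the common fixed vectors form an invariant subspace) and the second surjective
(`⨆ j, range (N j - 1)` is invariant, and `D j - 1 = ∑ i < j, D i * (N i - 1)`), so the middle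
space has dimension at least `2n`.
-/

open Matrix Module LinearMap

theorem List.prod_ofFn_smul {S A : Type*} [CommMonoid S] [Monoid A] [MulAction S A]
    [IsScalarTower S A A] [SMulCommClass S A A] {m : ℕ} (c : Fin m → S) (f : Fin m → A) :
    (List.ofFn fun j => c j • f j).prod = (∏ j, c j) • (List.ofFn f).prod := by
  induction m with
  | zero => simp
  | succ m ih =>
    simp only [List.ofFn_succ, List.prod_cons, ih, Fin.prod_univ_succ, smul_mul_smul_comm]

theorem Fin.sum_partialProd_mul_sub_one {R : Type*} [Ring R] {m : ℕ} (f : Fin m → R) :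
    ∑ j, Fin.partialProd f j.castSucc * (f j - 1) = (List.ofFn f).prod - 1 := by
  induction m with
  | zero => simp
  | succ m ih =>
    rw [Fin.sum_univ_succ, List.ofFn_succ, List.prod_cons]
    simp only [Fin.castSucc_zero, Fin.partialProd_zero, one_mul, ← Fin.succ_castSucc,
      Fin.partialProd_succ', mul_assoc, ← Finset.mul_sum]
    have htail := ih (Fin.tail f)
    simp only [Fin.tail] at htail
    rw [htail]
    noncomm_ring

section Field

variable {K V : Type*} [Field K] [AddCommGroup V] [Module K V]

theorem LinearMap.two_mul_finrank_le_of_comp_eq_zero {U : Type*} [AddCommGroup U] [Module K U]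
    [FiniteDimensional K V] [FiniteDimensional K U] {α : V →ₗ[K] U} {β : U →ₗ[K] V}
    (hα : Function.Injective α) (hβ : Function.Surjective β) (hβα : β ∘ₗ α = 0) :
    2 * finrank K V ≤ finrank K U := by
  have hle : range α ≤ ker β := range_le_ker_iff.mpr hβα
  have hβ_rank := finrank_range_add_finrank_ker β
  rw [range_eq_top.mpr hβ, finrank_top] at hβ_rank
  have := finrank_range_of_inj hα
  have := Submodule.finrank_mono hle
  omega

theorem Module.End.range_partialProd_sub_one_le {m : ℕ} (N : Fin m → End K V) (k : Fin (m + 1)) :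
    range (Fin.partialProd N k - 1) ≤
      ⨆ j, (range (N j - 1)).map (Fin.partialProd N j.castSucc) := by
  induction k using Fin.induction with
  | zero => simp
  | succ j ih =>
    have hsplit : Fin.partialProd N j.succ - 1 =
        Fin.partialProd N j.castSucc * (N j - 1) + (Fin.partialProd N j.castSucc - 1) := by
      rw [Fin.partialProd_succ]; noncomm_ring
    rw [hsplit]
    refine (range_add_le _ _).trans (sup_le ?_ ih)
    rw [End.mul_eq_comp, range_comp]
    exact le_iSup (fun i => (range (N i - 1)).map (Fin.partialProd N i.castSucc)) j

theorem Module.End.two_mul_finrank_le_sum_finrank_range_sub_one [FiniteDimensional K V] {m : ℕ}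
    (N : Fin m → End K V) (hprod : (List.ofFn N).prod = 1)
    (hker : ⨅ j, ker (N j - 1) = ⊥) (hrange : ⨆ j, range (N j - 1) = ⊤) :
    2 * finrank K V ≤ ∑ j, finrank K (range (N j - 1)) := by
  set D := Fin.partialProd N
  let α : V →ₗ[K] Π j, range (N j - 1) := pi fun j => (N j - 1).rangeRestrict
  let β : (Π j, range (N j - 1)) →ₗ[K] V :=
    lsum K (fun j => range (N j - 1)) K fun j => D j.castSucc ∘ₗ (range (N j - 1)).subtype
  have hα : Function.Injective α := by
    rw [← ker_eq_bot, ker_pi]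
    simpa only [ker_rangeRestrict] using hker
  have hmap_le : ∀ j, (range (N j - 1)).map (D j.castSucc) ≤ range β := by
    rintro j _ ⟨w, hw, rfl⟩
    exact ⟨Pi.single j ⟨w, hw⟩, lsum_piSingle K _ K _ j _⟩
  have hβ : Function.Surjective β := by
    have hD : ∀ k, range (D k - 1) ≤ range β :=
      fun k => (End.range_partialProd_sub_one_le N k).trans (iSup_le hmap_le)
    rw [← range_eq_top, eq_top_iff, ← hrange, iSup_le_iff]
    intro j w hw
    rw [show w = D j.castSucc w - (D j.castSucc - 1) w by simp]
    exact sub_mem (hmap_le j ⟨w, hw, rfl⟩) (hD _ (mem_range_self _ w))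
  have hβα : β ∘ₗ α = 0 := by
    ext v
    have htel := congrArg (· v) (Fin.sum_partialProd_mul_sub_one N)
    simpa [α, β, hprod] using htel
  rw [← Module.finrank_pi_fintype]
  exact two_mul_finrank_le_of_comp_eq_zero hα hβ hβα

def Module.End.IsIrreducibleFamily {ι : Type*} (N : ι → End K V) : Prop :=
  ∀ W : Submodule K V, (∀ j, W ∈ (N j).invtSubmodule) → W = ⊥ ∨ W = ⊤

namespace Module.End.IsIrreducibleFamily

variable {ι : Type*} {N : ι → End K V}

theorem smul (hN : IsIrreducibleFamily N) {c : ι → K} (hc : ∀ j, c j ≠ 0) :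
    IsIrreducibleFamily fun j => c j • N j := by
  refine fun W hW => hN W fun j => ?_
  have := invtSubmodule_le_invtSubmodule_smul (c j • N j) (c j)⁻¹ (hW j)
  rwa [smul_smul, inv_mul_cancel₀ (hc j), one_smul] at this

theorem exists_ne_one (hN : IsIrreducibleFamily N) (h2 : 2 ≤ finrank K V) : ∃ j, N j ≠ 1 := by
  by_contra! hone
  have := Module.finite_of_finrank_pos (R := K) (by omega : 0 < finrank K V)
  obtain ⟨v, hv⟩ := (finrank_pos_iff_exists_ne_zero (R := K)).mp (by omega : 0 < finrank K V)
  rcases hN (K ∙ v) fun j w hw => by simpa [hone j] using hw with hbot | htop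
  · exact hv (Submodule.span_singleton_eq_bot.mp hbot)
  · have := finrank_span_singleton (K := K) hv
    rw [htop, finrank_top] at this
    omega

theorem iInf_ker_sub_one_eq_bot (hN : IsIrreducibleFamily N) (hne : ∃ j, N j ≠ 1) :
    ⨅ j, ker (N j - 1) = ⊥ := by
  refine (hN _ fun i v hv => ?_).resolve_right ?_
  · have hfix : N i v - v = 0 := (Submodule.mem_iInf _).mp hv i
    rwa [Submodule.mem_comap, sub_eq_zero.mp hfix]
  · obtain ⟨j, hj⟩ := hne
    rw [iInf_eq_top]
    exact fun h => hj (sub_eq_zero.mp (ker_eq_top.mp (h j)))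

theorem iSup_range_sub_one_eq_top (hN : IsIrreducibleFamily N) (hne : ∃ j, N j ≠ 1) :
    ⨆ j, range (N j - 1) = ⊤ := by
  refine (hN _ fun i v hv => ?_).resolve_left ?_
  · rw [Submodule.mem_comap, show N i v = v + (N i - 1) v by simp]
    exact add_mem hv (Submodule.mem_iSup_of_mem i (mem_range_self _ v))
  · obtain ⟨j, hj⟩ := hne
    rw [iSup_eq_bot]
    exact fun h => hj (sub_eq_zero.mp (range_eq_bot.mp (h j)))

theorem two_mul_finrank_le_sum_finrank_range_sub_one [FiniteDimensional K V] {m : ℕ}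
    {N : Fin m → End K V} (hN : IsIrreducibleFamily N) (h2 : 2 ≤ finrank K V)
    (hprod : (List.ofFn N).prod = 1) :
    2 * finrank K V ≤ ∑ j, finrank K (range (N j - 1)) :=
  have hne := hN.exists_ne_one h2
  End.two_mul_finrank_le_sum_finrank_range_sub_one N hprod (hN.iInf_ker_sub_one_eq_bot hne)
    (hN.iSup_range_sub_one_eq_top hne)

end Module.End.IsIrreducibleFamily

end Field

theorem stmt15_general (p n : ℕ) (hn : 2 ≤ n) (M : Fin (p + 1) → Matrix (Fin n) (Fin n) ℂ)
    (hprod : (List.ofFn M).prod = 1)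
    (hirr : ∀ V : Submodule ℂ (Fin n → ℂ),
      (∀ j, ∀ v ∈ V, Matrix.toLin' (M j) v ∈ V) → V = ⊥ ∨ V = ⊤)
    (b : Fin (p + 1) → ℂ) (hb : ∀ j, b j ≠ 0) (hbp : ∏ j, b j = 1) :
    2 * n ≤ ∑ j, (b j • M j - 1).rank := by
  have hN : End.IsIrreducibleFamily fun j => b j • toLin' (M j) :=
    End.IsIrreducibleFamily.smul hirr hb
  have hprodN : (List.ofFn fun j => b j • toLin' (M j)).prod = 1 := by
    rw [List.prod_ofFn_smul, hbp, one_smul]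
    have h := congrArg Matrix.toLinAlgEquiv' hprod
    rwa [map_list_prod, List.map_ofFn, map_one] at h
  have hrank : ∀ j, (b j • M j - 1).rank = finrank ℂ (range (b j • toLin' (M j) - 1)) := by
    intro j
    rw [Matrix.rank, ← Matrix.toLin'_apply', map_sub, map_smul, Matrix.toLin'_one]
    rfl
  simp only [hrank]
  simpa using hN.two_mul_finrank_le_sum_finrank_range_sub_one (by simpa using hn) hprodN

theorem stmt15 (p n : ℕ) (hn : 2 ≤ n) (M : Fin (p + 1) → Matrix (Fin n) (Fin n) ℂ)
    (hinv : ∀ j, IsUnit (M j))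
    (hprod : (List.ofFn M).prod = 1)
    (hirr : ∀ V : Submodule ℂ (Fin n → ℂ),
      (∀ j, ∀ v ∈ V, Matrix.toLin' (M j) v ∈ V) → V = ⊥ ∨ V = ⊤)
    (b : Fin (p + 1) → ℂ) (hb : ∀ j, b j ≠ 0) (hbp : ∏ j, b j = 1) :
    2 * n ≤ ∑ j, (b j • M j - 1).rank :=
  stmt15_general p n hn M hprod hirr b hb hbp
end

section
/- For an irreducible tuple of matrices M_1, ..., M_{p+1} in GL(n, ℂ) with product I, writing d_j for the dimension of the conjugacy class of M_j, one has d_1 + ⋯ + d_{p+1} ≥ 2n² − 2. -/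
open Matrix

/-- The centralizer of a matrix `Y` in `gl(n, ℂ)`, as a linear subspace of matrices. -/
noncomputable def matCentralizer (n : ℕ) (Y : Matrix (Fin n) (Fin n) ℂ) :
    Submodule ℂ (Matrix (Fin n) (Fin n) ℂ) where
  carrier := {X | X * Y = Y * X}
  add_mem' := by
    intro a b ha hb
    simp only [Set.mem_setOf_eq] at *
    rw [add_mul, mul_add, ha, hb]
  zero_mem' := by simp
  smul_mem' := by
    intro c a ha
    simp only [Set.mem_setOf_eq] at *
    rw [smul_mul_assoc, mul_smul_comm, ha]

open Module LinearMap

lemma mem_matCentralizer {n : ℕ} {Y X : Matrix (Fin n) (Fin n) ℂ} :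
    X ∈ matCentralizer n Y ↔ X * Y = Y * X := Iff.rfl



variable {n : ℕ}

/-- Conjugation by a unit matrix, as a linear equivalence. -/
noncomputable def conjE (a : (Matrix (Fin n) (Fin n) ℂ)ˣ) :
    Matrix (Fin n) (Fin n) ℂ ≃ₗ[ℂ] Matrix (Fin n) (Fin n) ℂ where
  toFun X := ↑a * X * ↑a⁻¹
  invFun X := ↑a⁻¹ * X * ↑a
  map_add' X Y := by noncomm_ring
  map_smul' c X := by simp [Algebra.mul_smul_comm, Algebra.smul_mul_assoc]
  left_inv X := by
    simp only [mul_assoc, Units.inv_mul, mul_one, Units.inv_mul_cancel_left]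
  right_inv X := by
    simp only [mul_assoc, Units.mul_inv, mul_one, Units.mul_inv_cancel_left]

lemma conjE_apply (a : (Matrix (Fin n) (Fin n) ℂ)ˣ) (X : Matrix (Fin n) (Fin n) ℂ) :
    conjE a X = (a : Matrix (Fin n) (Fin n) ℂ) * X * (↑a⁻¹ : (Matrix (Fin n) (Fin n) ℂ)ˣ) := rfl

/-- The trace pairing map into the dual. -/
noncomputable def traceMap (n : ℕ) :
    Matrix (Fin n) (Fin n) ℂ →ₗ[ℂ] Module.Dual ℂ (Matrix (Fin n) (Fin n) ℂ) where
  toFun Y := (Matrix.traceLinearMap (Fin n) ℂ ℂ).comp (LinearMap.mulLeft ℂ Y)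
  map_add' Y Z := by ext X; simp [add_mul]
  map_smul' c Y := by ext X; simp [smul_mul_assoc]

lemma traceMap_apply (Y X : Matrix (Fin n) (Fin n) ℂ) :
    traceMap n Y X = Matrix.trace (Y * X) := rfl

lemma traceMap_injective : Function.Injective (traceMap n) := by
  rw [injective_iff_map_eq_zero]
  intro Y h
  ext i j
  have := congrFun (congrArg DFunLike.coe h) (Matrix.single j i 1)
  simp only [traceMap_apply, LinearMap.zero_apply] at this
  rw [Matrix.trace] at this
  simpa [Matrix.diag, Matrix.mul_apply, Matrix.single, ite_and,
    Finset.sum_ite_eq, Finset.sum_ite_eq'] using this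

lemma finrank_mw (n : ℕ) : Module.finrank ℂ (Matrix (Fin n) (Fin n) ℂ) = n ^ 2 := by
  rw [Module.finrank_matrix]
  simp [pow_two]

lemma traceMap_bijective : Function.Bijective (traceMap n) :=
  ⟨traceMap_injective,
    (LinearMap.injective_iff_surjective_of_finrank_eq_finrank
      (Subspace.dual_finrank_eq (K := ℂ) (V := Matrix (Fin n) (Fin n) ℂ)).symm).mp
      traceMap_injective⟩

lemma finrank_comap_dualAnnihilator (U : Submodule ℂ (Matrix (Fin n) (Fin n) ℂ)) :
    Module.finrank ℂ U
      + Module.finrank ℂ (Submodule.comap (traceMap n) U.dualAnnihilator) = n ^ 2 := by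
  set e := LinearEquiv.ofBijective (traceMap n) traceMap_bijective with he
  have h1 : Submodule.comap (traceMap n) U.dualAnnihilator
      = Submodule.map (e.symm : Dual ℂ (Matrix (Fin n) (Fin n) ℂ) →ₗ[ℂ] _)
          U.dualAnnihilator := by
    rw [← Submodule.comap_equiv_eq_map_symm]
    rfl
  rw [h1, LinearEquiv.finrank_map_eq, ← (Subspace.quotEquivAnnihilator U).finrank_eq,
    add_comm, Submodule.finrank_quotient_add_finrank, finrank_mw]

/-- A pi-submodule is linearly equivalent to the product of the submodules. -/
def piSubEquiv {R : Type*} [Semiring R] {ι : Type*} {M : ι → Type*}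
    [∀ i, AddCommMonoid (M i)] [∀ i, Module R (M i)] (q : ∀ i, Submodule R (M i)) :
    (Submodule.pi Set.univ q) ≃ₗ[R] (∀ i, q i) where
  toFun x i := ⟨x.1 i, x.2 i (Set.mem_univ i)⟩
  invFun y := ⟨fun i => y i, fun i _ => (y i).2⟩
  map_add' x y := rfl
  map_smul' c x := rfl
  left_inv x := rfl
  right_inv y := rfl

lemma finrank_piSub {ι : Type*} [Fintype ι] {M : ι → Type*}
    [∀ i, AddCommGroup (M i)] [∀ i, Module ℂ (M i)] [∀ i, FiniteDimensional ℂ (M i)]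
    (q : ∀ i, Submodule ℂ (M i)) :
    Module.finrank ℂ (Submodule.pi Set.univ q) = ∑ i, Module.finrank ℂ (q i) := by
  rw [(piSubEquiv q).finrank_eq, Module.finrank_pi_fintype]


/-- Schur's lemma: a matrix commuting with an irreducible family is scalar. -/
lemma schur_scalar {p n : ℕ} (hn : 2 ≤ n) (M : Fin (p + 1) → Matrix (Fin n) (Fin n) ℂ)
    (hirr : ∀ V : Submodule ℂ (Fin n → ℂ),
      (∀ j, ∀ v ∈ V, Matrix.toLin' (M j) v ∈ V) → V = ⊥ ∨ V = ⊤)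
    (X : Matrix (Fin n) (Fin n) ℂ) (hX : ∀ j, X * M j = M j * X) :
    ∃ c : ℂ, X = c • (1 : Matrix (Fin n) (Fin n) ℂ) := by
  haveI : Nonempty (Fin n) := ⟨⟨0, by omega⟩⟩
  obtain ⟨μ, hμ⟩ := Module.End.exists_eigenvalue (Matrix.toLin' X)
  obtain ⟨v, hv⟩ := hμ.exists_hasEigenvector
  set V := Module.End.eigenspace (Matrix.toLin' X) μ with hV
  have hinvar : ∀ j, ∀ w ∈ V, Matrix.toLin' (M j) w ∈ V := by
    intro j w hw
    rw [hV, Module.End.mem_eigenspace_iff] at hw ⊢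
    calc Matrix.toLin' X (Matrix.toLin' (M j) w)
        = Matrix.toLin' (X * M j) w := by rw [Matrix.toLin'_mul]; rfl
      _ = Matrix.toLin' (M j * X) w := by rw [hX j]
      _ = Matrix.toLin' (M j) (Matrix.toLin' X w) := by rw [Matrix.toLin'_mul]; rfl
      _ = μ • Matrix.toLin' (M j) w := by rw [hw, _root_.map_smul]
  rcases hirr V hinvar with h | h
  · have hv1 : v ∈ V := hv.1
    rw [h, Submodule.mem_bot] at hv1
    exact absurd hv1 hv.2
  · refine ⟨μ, Matrix.toLin'.injective ?_⟩
    apply LinearMap.ext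
    intro w
    have hw : w ∈ V := h ▸ Submodule.mem_top
    rw [hV, Module.End.mem_eigenspace_iff] at hw
    rw [hw, _root_.map_smul, Matrix.toLin'_one]
    simp


set_option maxHeartbeats 1600000 in
theorem stmt17 (p n : ℕ) (hn : 2 ≤ n) (M : Fin (p + 1) → Matrix (Fin n) (Fin n) ℂ)
    (hinv : ∀ j, IsUnit (M j))
    (hprod : (List.ofFn M).prod = 1)
    (hirr : ∀ V : Submodule ℂ (Fin n → ℂ),
      (∀ j, ∀ v ∈ V, Matrix.toLin' (M j) v ∈ V) → V = ⊥ ∨ V = ⊤) :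
    2 * n ^ 2 - 2 ≤ ∑ j, (n ^ 2 - Module.finrank ℂ (matCentralizer n (M j))) := by
  classical
  set u : Fin (p + 1) → (Matrix (Fin n) (Fin n) ℂ)ˣ := fun j => (hinv j).unit with hu_def
  have hu : ∀ j, (u j : Matrix (Fin n) (Fin n) ℂ) = M j := fun j => (hinv j).unit_spec
  set Pu : ℕ → (Matrix (Fin n) (Fin n) ℂ)ˣ := fun t => ((List.ofFn u).take t).prod with hPu_def
  set F : ℕ → (Matrix (Fin n) (Fin n) ℂ →ₗ[ℂ] Matrix (Fin n) (Fin n) ℂ) :=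
    fun t => (conjE (Pu t) : Matrix (Fin n) (Fin n) ℂ →ₗ[ℂ] Matrix (Fin n) (Fin n) ℂ)
    with hF_def
  have hPsucc : ∀ j : Fin (p + 1), Pu (↑j + 1) = Pu ↑j * u j := by
    intro j
    have hlen : (j : ℕ) < (List.ofFn u).length := by simpa using j.isLt
    simp only [hPu_def]
    rw [List.prod_take_succ (List.ofFn u) j hlen]
    congr 1
    rw [List.getElem_ofFn]
  have hP0 : Pu 0 = 1 := rfl
  have hPlast : Pu (p + 1) = 1 := by
    apply Units.ext
    show (((List.ofFn u).take (p + 1)).prod : Matrix (Fin n) (Fin n) ℂ) = 1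
    rw [List.take_of_length_le (by simp), ← hprod,
      show (((List.ofFn u).prod : (Matrix (Fin n) (Fin n) ℂ)ˣ) : Matrix (Fin n) (Fin n) ℂ)
        = Units.coeHom _ (List.ofFn u).prod from rfl,
      map_list_prod (Units.coeHom (Matrix (Fin n) (Fin n) ℂ))]
    congr 1
    rw [List.map_ofFn]
    exact congrArg List.ofFn (funext fun j => hu j)
  -- the linear maps
  set B : Fin (p + 1) → (Matrix (Fin n) (Fin n) ℂ →ₗ[ℂ] Matrix (Fin n) (Fin n) ℂ) :=
    fun j => (conjE (u j) : Matrix (Fin n) (Fin n) ℂ →ₗ[ℂ] _) - LinearMap.id with hB_def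
  set C : Fin (p + 1) → (Matrix (Fin n) (Fin n) ℂ →ₗ[ℂ] Matrix (Fin n) (Fin n) ℂ) :=
    fun j => F (↑j + 1) - F ↑j with hC_def
  have hCB : ∀ j, C j = (conjE (Pu ↑j) : Matrix (Fin n) (Fin n) ℂ →ₗ[ℂ] _) ∘ₗ B j := by
    intro j
    ext X
    simp only [hC_def, hF_def, hB_def, LinearMap.sub_apply, LinearMap.comp_apply,
      LinearEquiv.coe_coe, LinearMap.id_apply, map_sub, conjE_apply]
    rw [hPsucc j]
    rw [_root_.mul_inv_rev]
    simp only [Units.val_mul]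
    simp [mul_sub, sub_mul, mul_assoc]
  have hCsum : (∑ j, C j) = 0 := by
    simp only [hC_def]
    refine Eq.trans (Fin.sum_univ_eq_sum_range (fun t => F (t + 1) - F t) (p + 1)) ?_
    rw [Finset.sum_range_sub F]
    simp only [hF_def]
    rw [hPlast, hP0, sub_self]
  have hkerB : ∀ j, LinearMap.ker (B j) = matCentralizer n (M j) := by
    intro j
    ext X
    rw [LinearMap.mem_ker, mem_matCentralizer, ← hu j]
    simp only [hB_def, LinearMap.sub_apply, LinearEquiv.coe_coe, LinearMap.id_apply,
      conjE_apply, sub_eq_zero]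
    constructor
    · intro h
      have h2 := congrArg (fun Z : Matrix (Fin n) (Fin n) ℂ => Z * (u j : Matrix (Fin n) (Fin n) ℂ)) h
      simp only [Units.inv_mul_cancel_right] at h2
      exact h2.symm
    · intro h
      rw [← h, Units.mul_inv_cancel_right]
  have hrank : ∀ j, Module.finrank ℂ (LinearMap.range (B j))
      + Module.finrank ℂ (matCentralizer n (M j)) = n ^ 2 := by
    intro j
    rw [← hkerB j, LinearMap.finrank_range_add_finrank_ker, finrank_mw]
  have hrangeC : ∀ j, Module.finrank ℂ (LinearMap.range (C j))
      = Module.finrank ℂ (LinearMap.range (B j)) := by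
    intro j
    rw [hCB j, LinearMap.range_comp]
    exact LinearEquiv.finrank_map_eq _ _
  -- pi maps
  set S : (Fin (p + 1) → Matrix (Fin n) (Fin n) ℂ) →ₗ[ℂ] Matrix (Fin n) (Fin n) ℂ :=
    ∑ j, LinearMap.proj j with hS_def
  set D : (Fin (p + 1) → Matrix (Fin n) (Fin n) ℂ) →ₗ[ℂ] (Fin (p + 1) → Matrix (Fin n) (Fin n) ℂ) :=
    LinearMap.pi (fun j => (C j) ∘ₗ LinearMap.proj j) with hD_def
  set Psi : Matrix (Fin n) (Fin n) ℂ →ₗ[ℂ] (Fin (p + 1) → Matrix (Fin n) (Fin n) ℂ) :=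
    LinearMap.pi C with hPsi_def
  have hS : ∀ w : Fin (p + 1) → Matrix (Fin n) (Fin n) ℂ, S w = ∑ j, w j := by
    intro w
    simp [hS_def, LinearMap.sum_apply]
  have hD : ∀ v j, D v j = C j (v j) := by
    intro v j
    simp only [hD_def]
    rfl
  set U : Submodule ℂ (Matrix (Fin n) (Fin n) ℂ) := ⨆ j, LinearMap.range (C j) with hU_def
  have hSD : LinearMap.range (S ∘ₗ D) = U := by
    apply le_antisymm
    · rintro x ⟨v, rfl⟩
      rw [LinearMap.comp_apply, hS]
      refine Submodule.sum_mem _ fun j _ => ?_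
      exact (le_iSup (fun j => LinearMap.range (C j)) j) ⟨v j, rfl⟩
    · refine iSup_le fun j => ?_
      rintro x ⟨y, rfl⟩
      refine ⟨Pi.single j y, ?_⟩
      rw [LinearMap.comp_apply, hS]
      rw [Finset.sum_eq_single j]
      · rw [hD, Pi.single_eq_same]
      · intro i _ hij
        rw [hD, Pi.single_eq_of_ne hij, map_zero]
      · intro h
        exact absurd (Finset.mem_univ j) h
  have hineq1 : Module.finrank ℂ (LinearMap.range D)
      ≤ ∑ j, Module.finrank ℂ (LinearMap.range (C j)) := by
    have hle : LinearMap.range D ≤ Submodule.pi Set.univ (fun j => LinearMap.range (C j)) := by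
      rintro x ⟨v, rfl⟩ i _
      exact ⟨v i, (hD v i).symm⟩
    calc Module.finrank ℂ (LinearMap.range D)
        ≤ Module.finrank ℂ (Submodule.pi Set.univ (fun j => LinearMap.range (C j))) :=
          Submodule.finrank_mono hle
      _ = ∑ j, Module.finrank ℂ (LinearMap.range (C j)) := finrank_piSub _
  have hineq2 : Module.finrank ℂ U
        + Module.finrank ℂ (LinearMap.ker (S.domRestrict (LinearMap.range D)))
      = Module.finrank ℂ (LinearMap.range D) := by
    have h := LinearMap.finrank_range_add_finrank_ker (S.domRestrict (LinearMap.range D))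
    rwa [LinearMap.range_domRestrict,
      show Submodule.map S (LinearMap.range D) = U by rw [← LinearMap.range_comp]; exact hSD] at h
  have hineq3 : Module.finrank ℂ (LinearMap.range Psi)
      ≤ Module.finrank ℂ (LinearMap.ker (S.domRestrict (LinearMap.range D))) := by
    have hPle : LinearMap.range Psi ≤ LinearMap.ker S ⊓ LinearMap.range D := by
      rintro x ⟨w, rfl⟩
      constructor
      · show Psi w ∈ LinearMap.ker S
        rw [LinearMap.mem_ker, hS]
        have h2 : ∑ j, Psi w j = (∑ j, C j) w := by
          rw [LinearMap.sum_apply]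
          rfl
        rw [h2, hCsum, LinearMap.zero_apply]
      · refine ⟨fun _ => w, ?_⟩
        simp only [hD_def, hPsi_def]
        rfl
    calc Module.finrank ℂ (LinearMap.range Psi)
        ≤ Module.finrank ℂ (LinearMap.ker S ⊓ LinearMap.range D : Submodule ℂ _) :=
          Submodule.finrank_mono hPle
      _ = Module.finrank ℂ (Submodule.comap (LinearMap.range D).subtype
            (LinearMap.ker S ⊓ LinearMap.range D)) :=
          (Submodule.comapSubtypeEquivOfLe inf_le_right).finrank_eq.symm
      _ ≤ Module.finrank ℂ (Submodule.comap (LinearMap.range D).subtype (LinearMap.ker S)) :=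
          Submodule.finrank_mono (Submodule.comap_mono inf_le_left)
      _ = Module.finrank ℂ (LinearMap.ker (S.domRestrict (LinearMap.range D))) := by
          rw [LinearMap.ker_domRestrict]
  have hkerC : ∀ j, LinearMap.ker (C j) = matCentralizer n (M j) := by
    intro j
    rw [hCB j, LinearMap.ker_comp, LinearEquiv.ker, Submodule.comap_bot, hkerB j]
  have hone_ne : (1 : Matrix (Fin n) (Fin n) ℂ) ≠ 0 := by
    intro h
    have := congrFun (congrFun h ⟨0, by omega⟩) ⟨0, by omega⟩
    simp at this
  have hkerPsi : LinearMap.ker Psi = Submodule.span ℂ {(1 : Matrix (Fin n) (Fin n) ℂ)} := by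
    rw [hPsi_def, LinearMap.ker_pi]
    apply le_antisymm
    · intro X hX
      rw [Submodule.mem_iInf] at hX
      have hc : ∀ j, X * M j = M j * X := by
        intro j
        have h3 := hX j
        rw [hkerC j] at h3
        exact h3
      obtain ⟨c, rfl⟩ := schur_scalar hn M hirr X hc
      exact Submodule.smul_mem _ _ (Submodule.mem_span_singleton_self 1)
    · rw [Submodule.span_le, Set.singleton_subset_iff, SetLike.mem_coe, Submodule.mem_iInf]
      intro j
      rw [hkerC j, mem_matCentralizer, one_mul, mul_one]
  have hPsirank : Module.finrank ℂ (LinearMap.range Psi) + 1 = n ^ 2 := by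
    have h := LinearMap.finrank_range_add_finrank_ker Psi
    rwa [hkerPsi, finrank_span_singleton hone_ne, finrank_mw] at h
  -- commutation helper
  have comm_of_conj : ∀ (a : (Matrix (Fin n) (Fin n) ℂ)ˣ) (Y : Matrix (Fin n) (Fin n) ℂ),
      (↑a⁻¹ : Matrix (Fin n) (Fin n) ℂ) * Y * (↑a : Matrix (Fin n) (Fin n) ℂ) = Y
        → Y * (↑a : Matrix (Fin n) (Fin n) ℂ) = (↑a : Matrix (Fin n) (Fin n) ℂ) * Y := by
    intro a Y h
    have h2 := congrArg (fun Z : Matrix (Fin n) (Fin n) ℂ => (a : Matrix (Fin n) (Fin n) ℂ) * Z) h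
    rw [← mul_assoc, ← mul_assoc, Units.mul_inv, one_mul] at h2
    exact h2
  -- the trace-annihilator bound
  have hAle : Submodule.comap (traceMap n) U.dualAnnihilator
      ≤ Submodule.span ℂ {(1 : Matrix (Fin n) (Fin n) ℂ)} := by
    intro Y hY
    rw [Submodule.mem_comap, Submodule.mem_dualAnnihilator] at hY
    have cyc : ∀ P Q X : Matrix (Fin n) (Fin n) ℂ,
        Matrix.trace ((Q * Y * P) * X) = Matrix.trace (Y * (P * X * Q)) := by
      intro P Q X
      calc Matrix.trace ((Q * Y * P) * X) = Matrix.trace (Q * (Y * (P * X))) := by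
            rw [mul_assoc, mul_assoc]
        _ = Matrix.trace ((Y * (P * X)) * Q) := Matrix.trace_mul_comm _ _
        _ = Matrix.trace (Y * (P * X * Q)) := by rw [mul_assoc, mul_assoc]
    have hZ : ∀ j : Fin (p + 1),
        (↑(Pu (↑j + 1))⁻¹ : Matrix (Fin n) (Fin n) ℂ) * Y * (↑(Pu (↑j + 1)) : Matrix (Fin n) (Fin n) ℂ)
          = (↑(Pu ↑j)⁻¹ : Matrix (Fin n) (Fin n) ℂ) * Y * (↑(Pu ↑j) : Matrix (Fin n) (Fin n) ℂ) := by
      intro j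
      have key : ∀ X : Matrix (Fin n) (Fin n) ℂ,
          Matrix.trace (((↑(Pu (↑j + 1))⁻¹ : Matrix (Fin n) (Fin n) ℂ) * Y * (↑(Pu (↑j + 1)) : Matrix (Fin n) (Fin n) ℂ)) * X)
            = Matrix.trace (((↑(Pu ↑j)⁻¹ : Matrix (Fin n) (Fin n) ℂ) * Y * (↑(Pu ↑j) : Matrix (Fin n) (Fin n) ℂ)) * X) := by
        intro X
        have hmem : C j X ∈ U := (le_iSup (fun j => LinearMap.range (C j)) j) ⟨X, rfl⟩
        have h0 := hY _ hmem
        rw [traceMap_apply] at h0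
        simp only [hC_def, hF_def, LinearMap.sub_apply, LinearEquiv.coe_coe, conjE_apply] at h0
        rw [mul_sub, Matrix.trace_sub, sub_eq_zero] at h0
        rw [cyc, cyc]
        exact h0
      have h4 : traceMap n (((↑(Pu (↑j + 1))⁻¹ : Matrix (Fin n) (Fin n) ℂ) * Y * (↑(Pu (↑j + 1)) : Matrix (Fin n) (Fin n) ℂ))
          - ((↑(Pu ↑j)⁻¹ : Matrix (Fin n) (Fin n) ℂ) * Y * (↑(Pu ↑j) : Matrix (Fin n) (Fin n) ℂ))) = 0 := by
        apply LinearMap.ext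
        intro X
        rw [traceMap_apply, sub_mul, Matrix.trace_sub, LinearMap.zero_apply, sub_eq_zero]
        exact key X
      have h5 : ((↑(Pu (↑j + 1))⁻¹ : Matrix (Fin n) (Fin n) ℂ) * Y
            * (↑(Pu (↑j + 1)) : Matrix (Fin n) (Fin n) ℂ))
          - ((↑(Pu ↑j)⁻¹ : Matrix (Fin n) (Fin n) ℂ) * Y
            * (↑(Pu ↑j) : Matrix (Fin n) (Fin n) ℂ)) = 0 := by
        apply traceMap_injective
        rw [map_zero]
        exact h4
      exact sub_eq_zero.mp h5
    have hZconst : ∀ t : ℕ, t < p + 2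
        → (↑(Pu t)⁻¹ : Matrix (Fin n) (Fin n) ℂ) * Y * (↑(Pu t) : Matrix (Fin n) (Fin n) ℂ) = Y := by
      intro t
      induction t with
      | zero => intro _; rw [hP0]; simp
      | succ s ih =>
        intro hs
        have hs' : s < p + 1 := by omega
        have h6 := hZ ⟨s, hs'⟩
        simp only [Fin.val_mk] at h6
        rw [h6]
        exact ih (by omega)
    have hYc : ∀ j, Y * M j = M j * Y := by
      intro j
      have e1 := comm_of_conj _ _ (hZconst (↑j + 1) (by omega))
      have e0 := comm_of_conj _ _ (hZconst ↑j (by omega))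
      rw [hPsucc j, Units.val_mul] at e1
      have h7 : (↑(Pu ↑j) : Matrix (Fin n) (Fin n) ℂ) * (Y * (↑(u j) : Matrix (Fin n) (Fin n) ℂ))
          = (↑(Pu ↑j) : Matrix (Fin n) (Fin n) ℂ) * ((↑(u j) : Matrix (Fin n) (Fin n) ℂ) * Y) := by
        calc (↑(Pu ↑j) : Matrix (Fin n) (Fin n) ℂ) * (Y * (↑(u j) : Matrix (Fin n) (Fin n) ℂ))
            = ((↑(Pu ↑j) : Matrix (Fin n) (Fin n) ℂ) * Y) * (↑(u j) : Matrix (Fin n) (Fin n) ℂ) := (mul_assoc _ _ _).symm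
          _ = (Y * (↑(Pu ↑j) : Matrix (Fin n) (Fin n) ℂ)) * (↑(u j) : Matrix (Fin n) (Fin n) ℂ) := by rw [e0]
          _ = Y * ((↑(Pu ↑j) : Matrix (Fin n) (Fin n) ℂ) * (↑(u j) : Matrix (Fin n) (Fin n) ℂ)) := mul_assoc _ _ _
          _ = (↑(Pu ↑j) : Matrix (Fin n) (Fin n) ℂ) * (↑(u j) : Matrix (Fin n) (Fin n) ℂ) * Y := e1
          _ = (↑(Pu ↑j) : Matrix (Fin n) (Fin n) ℂ) * ((↑(u j) : Matrix (Fin n) (Fin n) ℂ) * Y) := mul_assoc _ _ _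
      have h8 := (Units.mul_right_inj (Pu ↑j)).mp h7
      rw [← hu j]
      exact h8
    obtain ⟨c, rfl⟩ := schur_scalar hn M hirr Y hYc
    exact Submodule.smul_mem _ _ (Submodule.mem_span_singleton_self 1)
  have hUrank : Module.finrank ℂ U
      + Module.finrank ℂ (Submodule.comap (traceMap n) U.dualAnnihilator) = n ^ 2 :=
    finrank_comap_dualAnnihilator U
  have hA1 : Module.finrank ℂ (Submodule.comap (traceMap n) U.dualAnnihilator) ≤ 1 := by
    calc Module.finrank ℂ (Submodule.comap (traceMap n) U.dualAnnihilator)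
        ≤ Module.finrank ℂ (Submodule.span ℂ {(1 : Matrix (Fin n) (Fin n) ℂ)}) :=
          Submodule.finrank_mono hAle
      _ = 1 := finrank_span_singleton hone_ne
  have hsum : ∑ j, (n ^ 2 - Module.finrank ℂ (matCentralizer n (M j)))
      = ∑ j, Module.finrank ℂ (LinearMap.range (B j)) := by
    refine Finset.sum_congr rfl fun j _ => ?_
    have := hrank j
    omega
  have hchain : Module.finrank ℂ U + Module.finrank ℂ (LinearMap.range Psi)
      ≤ ∑ j, Module.finrank ℂ (LinearMap.range (B j)) := by
    calc Module.finrank ℂ U + Module.finrank ℂ (LinearMap.range Psi)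
        ≤ Module.finrank ℂ U
            + Module.finrank ℂ (LinearMap.ker (S.domRestrict (LinearMap.range D))) := by
          omega
      _ = Module.finrank ℂ (LinearMap.range D) := hineq2
      _ ≤ ∑ j, Module.finrank ℂ (LinearMap.range (C j)) := hineq1
      _ = ∑ j, Module.finrank ℂ (LinearMap.range (B j)) :=
          Finset.sum_congr rfl fun j _ => hrangeC j
  rw [hsum]
  omega
end
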